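/- For ℏ > 0, the integrals ℓ_n = 2π∫₀^∞ t^n e^{Li₂(-t)/ℏ} dt and r_n = 2π∫₀^∞ (t^n/(1+t)) e^{Li₂(-t)/ℏ} dt (case Λ = ρ = 1) satisfy r_n·ℓ_n^{-1}·e^{ℏ(n+1/2)} → 1 as n → ∞; equivalently, ℓ_n ~ 2π√(2πℏ) e^{-π²/(6ℏ)} e^{ℏ(n+1)²/2} and r_n ~ 2π√(2πℏ) e^{-π²/(6ℏ)} e^{ℏ n²/2} as n → ∞. -/

import Mathlib

open Real Filter
open MeasureTheory Topology

noncomputable section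

/-- The real dilogarithm (for arguments `s ≤ 0`):
`Li₂(s) = -∫₀^s log(1-τ)/τ dτ`. -/
def Li2 (s : ℝ) : ℝ := -∫ τ in (0:ℝ)..s, Real.log (1 - τ) / τ

/-- `ℓ_n = 2π ∫₀^∞ t^n e^{Li₂(-t)/ℏ} dt`. -/
def ell (ℏ : ℝ) (n : ℕ) : ℝ :=
  2 * π * ∫ t in Set.Ioi (0:ℝ), t ^ n * Real.exp (Li2 (-t) / ℏ)

/-- `r_n = 2π ∫₀^∞ (t^n/(1+t)) e^{Li₂(-t)/ℏ} dt`. -/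
def rr (ℏ : ℝ) (n : ℕ) : ℝ :=
  2 * π * ∫ t in Set.Ioi (0:ℝ), t ^ n / (1 + t) * Real.exp (Li2 (-t) / ℏ)

/-! ### Elementary properties of the dilogarithm integrand -/

lemma g_nonpos {τ : ℝ} (hτ : τ ≤ 0) : Real.log (1 - τ) / τ ≤ 0 := by
  rcases eq_or_lt_of_le hτ with h | h
  · simp [h]
  · exact div_nonpos_of_nonneg_of_nonpos (Real.log_nonneg (by linarith)) hτ

lemma g_bound {τ : ℝ} (hτ : τ ≤ 0) : |Real.log (1 - τ) / τ| ≤ 1 := by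
  rcases eq_or_lt_of_le hτ with h | h
  · simp [h]
  · have h1 : Real.log (1 - τ) ≤ -τ := by
      have := Real.log_le_sub_one_of_pos (x := 1 - τ) (by linarith)
      linarith
    have hge : (-1 : ℝ) ≤ Real.log (1 - τ) / τ := by
      rw [le_div_iff_of_neg h]
      linarith
    exact abs_le.2 ⟨hge, (g_nonpos hτ).trans zero_le_one⟩

lemma g_measurable : Measurable (fun τ : ℝ => Real.log (1 - τ) / τ) :=
  (Real.measurable_log.comp (measurable_const.sub measurable_id)).div measurable_id

lemma g_intervalIntegrable {a b : ℝ} (ha : a ≤ 0) (hb : b ≤ 0) :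
    IntervalIntegrable (fun τ : ℝ => Real.log (1 - τ) / τ) volume a b := by
  rw [intervalIntegrable_iff]
  refine Integrable.mono' (g := fun _ => (1:ℝ))
    (integrableOn_const measure_Ioc_lt_top.ne)
    g_measurable.aestronglyMeasurable ?_
  filter_upwards [ae_restrict_mem measurableSet_Ioc] with τ hτ
  exact g_bound (hτ.2.trans (max_le ha hb))

lemma Li2_hasDerivAt {s : ℝ} (hs : s < 0) :
    HasDerivAt Li2 (-(Real.log (1 - s) / s)) s := by
  have h : HasDerivAt (fun u => ∫ τ in (0:ℝ)..u, Real.log (1 - τ) / τ)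
      (Real.log (1 - s) / s) s := by
    refine intervalIntegral.integral_hasDerivAt_right (g_intervalIntegrable le_rfl hs.le)
      (g_measurable.stronglyMeasurable.stronglyMeasurableAtFilter) ?_
    exact ContinuousAt.div ((Real.continuousAt_log (by linarith)).comp
      (continuous_const.sub continuous_id).continuousAt) continuousAt_id hs.ne
  exact h.neg

lemma Li2_abs_le {s : ℝ} (hs : s ≤ 0) : |Li2 s| ≤ |s| := by
  have h := intervalIntegral.norm_integral_le_of_norm_le_const
    (a := (0:ℝ)) (b := s) (C := 1) (f := fun τ => Real.log (1 - τ) / τ) ?_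
  · rw [Li2, abs_neg]
    simpa [abs_sub_comm] using h
  · intro x hx
    rw [Set.uIoc_of_ge hs] at hx
    rw [Real.norm_eq_abs]
    exact g_bound hx.2

lemma Li2_nonpos {s : ℝ} (hs : s ≤ 0) : Li2 s ≤ 0 := by
  rw [Li2, neg_nonpos, intervalIntegral.integral_symm]
  rw [neg_nonneg]
  have : ∀ u ∈ Set.Icc s 0, 0 ≤ -(Real.log (1 - u) / u) := fun u hu =>
    neg_nonneg.2 (g_nonpos hu.2)
  have h2 := intervalIntegral.integral_nonneg (μ := volume) hs this
  rw [intervalIntegral.integral_neg] at h2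
  linarith

/-! ### The value `Li2 (-1) = -π²/12` -/

lemma hz1 : HasSum (fun n : ℕ => (1:ℝ) / ((n:ℝ)+1)^2) (π^2/6) := by
  have hz : HasSum (fun n : ℕ => (1:ℝ) / (n:ℝ)^2) (π^2/6) := hasSum_zeta_two
  have h := (hasSum_nat_add_iff (f := fun n : ℕ => (1:ℝ) / (n:ℝ)^2) 1
    (g := π^2/6)).2 (by simpa using hz)
  refine h.congr_fun fun n => ?_
  push_cast; ring_nf

lemma hasSum_alt : HasSum (fun k : ℕ => (-1:ℝ)^k / ((k:ℝ)+1)^2) (π^2/12) := by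
  have hz : HasSum (fun n : ℕ => (1:ℝ) / (n:ℝ)^2) (π^2/6) := hasSum_zeta_two
  have he : HasSum (fun k : ℕ => (1:ℝ) / ((2*(k:ℝ)))^2) (π^2/24) := by
    have h4 := hz.mul_left (1/4)
    have : (π^2/24 : ℝ) = 1/4 * (π^2/6) := by ring
    rw [this]
    refine h4.congr_fun fun n => ?_
    rcases eq_or_ne (n:ℝ) 0 with h | h
    · simp [h]
    · field_simp; ring
  have hsum_odd : Summable (fun k : ℕ => (1:ℝ) / ((2*(k:ℝ))+1)^2) := by
    have := hz.summable.comp_injective (i := fun k : ℕ => 2*k+1)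
      (fun a b hab => by simpa using hab)
    refine this.congr fun n => ?_
    simp only [Function.comp_apply]
    push_cast; ring_nf
  have ho : HasSum (fun k : ℕ => (1:ℝ) / ((2*(k:ℝ))+1)^2) (π^2/8) := by
    have hcomb := HasSum.even_add_odd (f := fun n : ℕ => (1:ℝ)/(n:ℝ)^2)
      (by refine he.congr_fun fun k => ?_; push_cast; ring_nf)
      (by refine hsum_odd.hasSum.congr_fun fun k => ?_; push_cast; ring_nf)
    have := hz.unique hcomb
    have h8 : ∑' k : ℕ, (1:ℝ) / ((2*(k:ℝ))+1)^2 = π^2/8 := by linarith [this]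
    rw [← h8]; exact hsum_odd.hasSum
  have haltE : HasSum (fun k : ℕ => (-1:ℝ)^(2*k) / ((2*k:ℝ)+1)^2) (π^2/8) := by
    refine ho.congr_fun fun k => ?_
    rw [pow_mul]
    norm_num
  have haltO : HasSum (fun k : ℕ => (-1:ℝ)^(2*k+1) / ((2*k+1:ℝ)+1)^2) (-(π^2/24)) := by
    have h4 := (hz1.mul_left (-(1/4)))
    have : (-(π^2/24) : ℝ) = -(1/4) * (π^2/6) := by ring
    rw [this]
    refine h4.congr_fun fun k => ?_
    rw [pow_succ, pow_mul]
    norm_num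
    have hk : ((2:ℝ)*k+1+1)^2 = 4*((k:ℝ)+1)^2 := by ring
    rw [hk]
    field_simp
  have := HasSum.even_add_odd (f := fun k : ℕ => (-1:ℝ)^k / ((k:ℝ)+1)^2)
    (by refine haltE.congr_fun fun k => ?_; push_cast; ring_nf)
    (by refine haltO.congr_fun fun k => ?_; push_cast; ring_nf)
  convert this using 1
  ring

lemma Li2_neg_one : Li2 (-1) = -(π^2/12) := by
  have hle : (-1:ℝ) ≤ 0 := by norm_num
  have h1 : Li2 (-1) = ∫ τ in Set.Ioc (-1:ℝ) 0, Real.log (1 - τ) / τ := by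
    rw [Li2, intervalIntegral.integral_symm, neg_neg,
      intervalIntegral.integral_of_le hle]
  rw [h1]
  set F : ℕ → ℝ → ℝ := fun n τ => -(τ^n / ((n:ℝ)+1)) with hF
  have hae : ∀ᵐ τ : ℝ ∂(volume.restrict (Set.Ioc (-1:ℝ) 0)),
      Real.log (1 - τ) / τ = ∑' n, F n τ := by
    have h0 : ∀ᵐ τ : ℝ ∂(volume.restrict (Set.Ioc (-1:ℝ) 0)), τ ≠ 0 := by
      refine ae_restrict_of_ae ?_
      refine ae_iff.2 ?_
      simp only [ne_eq, not_not]
      have : {τ : ℝ | τ = 0} = {0} := by ext x; simp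
      rw [this]
      exact measure_singleton 0
    filter_upwards [h0, ae_restrict_mem measurableSet_Ioc] with τ hτ0 hτm
    have habs : |τ| < 1 := by
      rw [abs_lt]; constructor
      · linarith [hτm.1]
      · have := hτm.2; rcases lt_or_eq_of_le this with h | h
        · linarith
        · exact absurd h hτ0
    have hs := hasSum_pow_div_log_of_abs_lt_one habs
    have hs2 := hs.div_const τ
    have hs3 : HasSum (fun n : ℕ => -F n τ) (-Real.log (1 - τ) / τ) := by
      refine hs2.congr_fun fun n => ?_
      rw [hF]
      simp only [neg_neg]
      rw [pow_succ]
      field_simp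
    have h4 : HasSum (fun n => F n τ) (Real.log (1 - τ) / τ) := by
      have := hs3.neg
      simp only [neg_neg, neg_div] at this
      exact this
    exact h4.tsum_eq.symm
  rw [integral_congr_ae hae]
  have hFint : ∀ n : ℕ, IntegrableOn (F n) (Set.Ioc (-1:ℝ) 0) := by
    intro n
    apply Continuous.integrableOn_Ioc
    exact ((continuous_pow n).div_const _).neg
  have hnorm : ∀ n : ℕ, ∫ τ in Set.Ioc (-1:ℝ) 0, ‖F n τ‖ = 1/((n:ℝ)+1)^2 := by
    intro n
    have hcast : (0:ℝ) < (n:ℝ)+1 := by positivity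
    have : ∀ τ ∈ Set.Ioc (-1:ℝ) 0, ‖F n τ‖ = (-τ)^n / ((n:ℝ)+1) := by
      intro τ hτ
      rw [hF]
      simp only [norm_neg, Real.norm_eq_abs, abs_div]
      rw [abs_of_pos hcast, abs_pow, abs_of_nonpos hτ.2]
    rw [setIntegral_congr_fun measurableSet_Ioc this]
    rw [← intervalIntegral.integral_of_le (by norm_num : (-1:ℝ) ≤ 0)]
    have hcn : ∫ τ in (-1:ℝ)..0, (-τ)^n / ((n:ℝ)+1)
        = (∫ τ in (-1:ℝ)..0, (-τ)^n) / ((n:ℝ)+1) := by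
      rw [intervalIntegral.integral_div]
    rw [hcn]
    have hcv : ∫ τ in (-1:ℝ)..0, (-τ)^n = ∫ u in (0:ℝ)..1, u^n := by
      have := intervalIntegral.integral_comp_neg (a := (-1:ℝ)) (b := 0)
        (f := fun u => u^n)
      rw [this]
      norm_num
    rw [hcv, integral_pow]
    field_simp
    ring
  have hval : ∀ n : ℕ, ∫ τ in Set.Ioc (-1:ℝ) 0, F n τ = -((-1:ℝ)^n/((n:ℝ)+1)^2) := by
    intro n
    rw [← intervalIntegral.integral_of_le (by norm_num : (-1:ℝ) ≤ 0)]
    rw [hF]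
    simp only
    rw [intervalIntegral.integral_neg, intervalIntegral.integral_div, integral_pow]
    push_cast
    field_simp
    ring
  have hsummable : Summable (fun n : ℕ => ∫ τ in Set.Ioc (-1:ℝ) 0, ‖F n τ‖) := by
    simp only [hnorm]
    have : Summable (fun n : ℕ => 1/((n:ℝ)+1)^2) := by
      have := Real.summable_one_div_nat_pow.2 (le_refl 2) |>.comp_injective
        (i := fun n : ℕ => n + 1) (fun a b hab => by simpa using hab)
      refine this.congr fun n => ?_
      simp [Function.comp]
    exact this
  have key := integral_tsum_of_summable_integral_norm hFint hsummable
  rw [← key]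
  simp only [hval]
  have := hasSum_alt.neg
  rw [this.tsum_eq]

/-! ### The functional equation -/

lemma funeq (x : ℝ) :
    Li2 (-Real.exp x) = -π^2/6 - x^2/2 - Li2 (-Real.exp (-x)) := by
  set φ : ℝ → ℝ := fun x => Li2 (-Real.exp x) + Li2 (-Real.exp (-x)) + x^2/2 with hφ
  have hd : ∀ y : ℝ, HasDerivAt φ 0 y := by
    intro y
    have he : (0:ℝ) < Real.exp y := Real.exp_pos y
    have he' : (0:ℝ) < Real.exp (-y) := Real.exp_pos (-y)
    have h1 : HasDerivAt (fun z => Li2 (-Real.exp z)) (-Real.log (1 + Real.exp y)) y := by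
      refine ((Li2_hasDerivAt (by linarith : -Real.exp y < 0)).comp y
        ((Real.hasDerivAt_exp y).neg)).congr_deriv ?_
      rw [sub_neg_eq_add]
      field_simp
    have h2 : HasDerivAt (fun z => Li2 (-Real.exp (-z))) (Real.log (1 + Real.exp (-y))) y := by
      have hinner : HasDerivAt (fun z : ℝ => -Real.exp (-z)) (Real.exp (-y)) y := by
        have := ((Real.hasDerivAt_exp (-y)).comp y (hasDerivAt_neg y)).neg
        refine this.congr_deriv ?_
        ring
      refine ((Li2_hasDerivAt (by linarith : -Real.exp (-y) < 0)).comp y hinner).congr_deriv ?_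
      rw [sub_neg_eq_add]
      field_simp
    have h3 : HasDerivAt (fun z : ℝ => z^2/2) y y := by
      have := (hasDerivAt_pow 2 y).div_const 2
      refine this.congr_deriv ?_
      push_cast; ring
    have := (h1.add h2).add h3
    refine this.congr_deriv ?_
    have hlog : Real.log (1 + Real.exp (-y)) = Real.log (1 + Real.exp y) - y := by
      have : (1:ℝ) + Real.exp (-y) = (1 + Real.exp y) * Real.exp (-y) := by
        rw [add_mul, one_mul, ← Real.exp_add]
        rw [add_neg_cancel, Real.exp_zero]
        ring
      rw [this, Real.log_mul (by positivity) (by positivity), Real.log_exp]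
      ring
    rw [hlog]; ring
  have hconst : φ x = φ 0 :=
    is_const_of_deriv_eq_zero (fun y => (hd y).differentiableAt)
      (fun y => (hd y).deriv) x 0
  have h0 : φ 0 = -π^2/6 := by
    simp only [hφ, neg_zero, Real.exp_zero, Li2_neg_one]
    ring
  have := hconst.trans h0
  simp only [hφ] at this
  linarith

/-! ### The function `W` and its properties -/

def Wf (ℏ x : ℝ) : ℝ := Real.exp (-Li2 (-Real.exp (-x)) / ℏ)

lemma Li2_continuousOn : ContinuousOn Li2 (Set.Iio 0) := fun s hs =>
  ((Li2_hasDerivAt hs).continuousAt).continuousWithinAt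

lemma Wf_continuous (ℏ : ℝ) : Continuous (Wf ℏ) := by
  refine Real.continuous_exp.comp ?_
  refine Continuous.div_const ?_ ℏ
  refine Continuous.neg ?_
  refine Li2_continuousOn.comp_continuous ?_ ?_
  · exact (Real.continuous_exp.comp continuous_neg).neg
  · intro x
    exact Set.mem_Iio.2 (neg_lt_zero.2 (Real.exp_pos _))

lemma Li2_monotoneOn : MonotoneOn Li2 (Set.Iio 0) := by
  refine monotoneOn_of_deriv_nonneg (convex_Iio (0:ℝ)) Li2_continuousOn
    (fun s hs => by
      rw [interior_Iio] at hs
      exact (Li2_hasDerivAt hs).differentiableAt.differentiableWithinAt)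
    (fun s hs => by
      rw [interior_Iio] at hs
      rw [(Li2_hasDerivAt hs).deriv]
      exact neg_nonneg.2 (g_nonpos hs.le))

lemma Wf_antitone {ℏ : ℝ} (hℏ : 0 < ℏ) : Antitone (Wf ℏ) := by
  intro x y hxy
  rw [Wf, Wf, Real.exp_le_exp]
  have h1 : -Real.exp (-x) ≤ -Real.exp (-y) := by
    simp only [neg_le_neg_iff, Real.exp_le_exp]
    linarith
  have h2 : Li2 (-Real.exp (-x)) ≤ Li2 (-Real.exp (-y)) :=
    Li2_monotoneOn (Set.mem_Iio.2 (neg_lt_zero.2 (Real.exp_pos _)))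
      (Set.mem_Iio.2 (neg_lt_zero.2 (Real.exp_pos _))) h1
  have h3 : -Li2 (-Real.exp (-y)) ≤ -Li2 (-Real.exp (-x)) := by linarith
  rw [div_eq_mul_inv, div_eq_mul_inv]
  exact mul_le_mul_of_nonneg_right h3 (inv_nonneg.2 hℏ.le)

lemma Wf_one_le {ℏ : ℝ} (hℏ : 0 < ℏ) (x : ℝ) : 1 ≤ Wf ℏ x := by
  rw [Wf]
  apply Real.one_le_exp
  have h := Li2_nonpos (s := -Real.exp (-x)) (neg_nonpos.2 (Real.exp_pos _).le)
  apply div_nonneg (by linarith) hℏ.le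

lemma Wf_tendsto {ℏ : ℝ} (hℏ : 0 < ℏ) : Tendsto (Wf ℏ) atTop (𝓝 1) := by
  have h1 : Tendsto (fun x : ℝ => Li2 (-Real.exp (-x))) atTop (𝓝 0) := by
    refine squeeze_zero_norm (fun x => ?_) Real.tendsto_exp_neg_atTop_nhds_zero
    have h := Li2_abs_le (s := -Real.exp (-x)) (neg_nonpos.2 (Real.exp_pos _).le)
    simpa [abs_of_pos (Real.exp_pos (-x))] using h
  have h2 : Tendsto (fun x : ℝ => -Li2 (-Real.exp (-x)) / ℏ) atTop (𝓝 0) := by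
    have := (h1.neg).div_const ℏ
    simpa using this
  have := Real.continuous_exp.continuousAt.tendsto.comp h2
  rw [Real.exp_zero] at this
  exact this

lemma Wf_eq {ℏ : ℝ} (hℏ : ℏ ≠ 0) (x : ℝ) :
    Wf ℏ x = Real.exp ((π^2/6 + x^2/2 + Li2 (-Real.exp x)) / ℏ) := by
  rw [Wf, show -Li2 (-Real.exp (-x)) = π^2/6 + x^2/2 + Li2 (-Real.exp x) from by
    linarith [funeq x]]

/-! ### The Gaussian integral -/

lemma gauss_value {ℏ : ℝ} (hℏ : 0 < ℏ) :
    ∫ y : ℝ, Real.exp (-y^2/(2*ℏ)) = Real.sqrt (2*π*ℏ) := by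
  have h1 : (fun y : ℝ => Real.exp (-y^2/(2*ℏ))) = fun y : ℝ => Real.exp (-(1/(2*ℏ)) * y^2) := by
    funext y
    congr 1
    field_simp
  rw [h1, integral_gaussian]
  congr 1
  field_simp

/-! ### The dominating function -/

lemma dom_le {ℏ : ℝ} (hℏ : 0 < ℏ) (y : ℝ) :
    Real.exp (-y^2/(2*ℏ)) * Wf ℏ (y+ℏ) ≤ Real.exp (π^2/(6*ℏ) + ℏ/2) * Real.exp y := by
  rw [Wf_eq hℏ.ne', ← Real.exp_add, ← Real.exp_add, Real.exp_le_exp]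
  have hM : Li2 (-Real.exp (y+ℏ)) ≤ 0 := Li2_nonpos (neg_nonpos.2 (Real.exp_pos _).le)
  have hkey : -y^2/(2*ℏ) + (π^2/6 + (y+ℏ)^2/2 + Li2 (-Real.exp (y+ℏ))) / ℏ
      - (π^2/(6*ℏ) + ℏ/2 + y) = Li2 (-Real.exp (y+ℏ)) / ℏ := by
    field_simp
    ring
  have hle : Li2 (-Real.exp (y+ℏ)) / ℏ ≤ 0 := div_nonpos_of_nonpos_of_nonneg hM hℏ.le
  linarith

lemma dom_integrable {ℏ : ℝ} (hℏ : 0 < ℏ) :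
    Integrable (fun y : ℝ => Real.exp (-y^2/(2*ℏ)) * Wf ℏ (y+ℏ)) := by
  set D : ℝ → ℝ := fun y => Real.exp (-y^2/(2*ℏ)) * Wf ℏ (y+ℏ) with hD
  have hDc : Continuous D := by
    apply Continuous.mul
    · exact Real.continuous_exp.comp ((continuous_pow 2).neg.div_const _)
    · exact (Wf_continuous ℏ).comp (continuous_id.add continuous_const)
  have hDnn : ∀ y, 0 ≤ D y := fun y =>
    mul_nonneg (Real.exp_pos _).le (zero_le_one.trans (Wf_one_le hℏ _))
  have h1 : IntegrableOn D (Set.Iic (0:ℝ)) := by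
    refine Integrable.mono' (g := fun y => Real.exp (π^2/(6*ℏ) + ℏ/2) * Real.exp y)
      ((integrableOn_exp_Iic 0).const_mul _) hDc.aestronglyMeasurable.restrict ?_
    filter_upwards with y
    rw [Real.norm_eq_abs, abs_of_nonneg (hDnn y)]
    exact dom_le hℏ y
  have h2 : IntegrableOn D (Set.Ioi (0:ℝ)) := by
    refine Integrable.mono' (g := fun y => Wf ℏ ℏ * Real.exp (-(1/(2*ℏ)) * y^2))
      (((integrable_exp_neg_mul_sq (by positivity)).const_mul _).integrableOn)
      hDc.aestronglyMeasurable.restrict ?_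
    filter_upwards [ae_restrict_mem measurableSet_Ioi] with y hy
    rw [Real.norm_eq_abs, abs_of_nonneg (hDnn y)]
    have hW : Wf ℏ (y+ℏ) ≤ Wf ℏ ℏ := Wf_antitone hℏ (by linarith [Set.mem_Ioi.1 hy])
    have hexp : Real.exp (-y^2/(2*ℏ)) = Real.exp (-(1/(2*ℏ)) * y^2) := by
      congr 1; field_simp
    rw [hD]
    simp only
    rw [hexp, mul_comm]
    exact mul_le_mul_of_nonneg_right hW (Real.exp_pos _).le
  have := h1.union h2
  rw [Set.Iic_union_Ioi] at this
  exact integrableOn_univ.1 this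

/-! ### The main convergence lemma -/

lemma main_tendsto {ℏ : ℝ} (hℏ : 0 < ℏ) (σ : ℝ → ℝ) (hσc : Continuous σ)
    (hσ0 : ∀ x, 0 ≤ σ x) (hσ1 : ∀ x, σ x ≤ 1) (hσt : Tendsto σ atTop (𝓝 1)) :
    Tendsto (fun n : ℕ => ∫ y : ℝ,
        Real.exp (-y^2/(2*ℏ)) * Wf ℏ (y + ℏ*((n:ℝ)+1)) * σ (y + ℏ*((n:ℝ)+1)))
      atTop (𝓝 (Real.sqrt (2*π*ℏ))) := by
  rw [← gauss_value hℏ]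
  refine tendsto_integral_of_dominated_convergence
    (bound := fun y => Real.exp (-y^2/(2*ℏ)) * Wf ℏ (y+ℏ)) ?_ ?_ ?_ ?_
  · intro n
    refine Continuous.aestronglyMeasurable ?_
    refine Continuous.mul (Continuous.mul ?_ ?_) ?_
    · exact Real.continuous_exp.comp ((continuous_pow 2).neg.div_const _)
    · exact (Wf_continuous ℏ).comp (continuous_id.add continuous_const)
    · exact hσc.comp (continuous_id.add continuous_const)
  · exact dom_integrable hℏ
  · intro n
    filter_upwards with y
    have hWnn : (0:ℝ) ≤ Wf ℏ (y + ℏ*((n:ℝ)+1)) := zero_le_one.trans (Wf_one_le hℏ _)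
    have hF0 : 0 ≤ Real.exp (-y^2/(2*ℏ)) * Wf ℏ (y + ℏ*((n:ℝ)+1)) * σ (y + ℏ*((n:ℝ)+1)) := by
      apply mul_nonneg
      · exact mul_nonneg (Real.exp_pos _).le hWnn
      · exact hσ0 _
    rw [Real.norm_eq_abs, abs_of_nonneg hF0]
    have hWle : Wf ℏ (y + ℏ*((n:ℝ)+1)) ≤ Wf ℏ (y + ℏ) := by
      apply Wf_antitone hℏ
      have : ℏ * 1 ≤ ℏ * ((n:ℝ)+1) := by
        apply mul_le_mul_of_nonneg_left _ hℏ.le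
        have : (0:ℝ) ≤ (n:ℝ) := Nat.cast_nonneg n
        linarith
      linarith
    calc Real.exp (-y^2/(2*ℏ)) * Wf ℏ (y + ℏ*((n:ℝ)+1)) * σ (y + ℏ*((n:ℝ)+1))
        ≤ Real.exp (-y^2/(2*ℏ)) * Wf ℏ (y + ℏ*((n:ℝ)+1)) * 1 := by
          apply mul_le_mul_of_nonneg_left (hσ1 _)
          exact mul_nonneg (Real.exp_pos _).le hWnn
      _ = Real.exp (-y^2/(2*ℏ)) * Wf ℏ (y + ℏ*((n:ℝ)+1)) := by ring
      _ ≤ Real.exp (-y^2/(2*ℏ)) * Wf ℏ (y + ℏ) := by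
          exact mul_le_mul_of_nonneg_left hWle (Real.exp_pos _).le
  · filter_upwards with y
    have hshift : Tendsto (fun n : ℕ => y + ℏ*((n:ℝ)+1)) atTop atTop := by
      apply tendsto_atTop_add_const_left
      apply Tendsto.const_mul_atTop hℏ
      exact tendsto_atTop_add_const_right _ _ tendsto_natCast_atTop_atTop
    have hW := (Wf_tendsto hℏ).comp hshift
    have hσ := hσt.comp hshift
    have := ((tendsto_const_nhds (x := Real.exp (-y^2/(2*ℏ)))
      (f := atTop (α := ℕ))).mul hW).mul hσ
    simpa using this

/-! ### The substitution identities -/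

lemma ell_eq {ℏ : ℝ} (hℏ : 0 < ℏ) (n : ℕ) :
    ∫ t in Set.Ioi (0:ℝ), t ^ n * Real.exp (Li2 (-t) / ℏ)
    = Real.exp (-π^2/6/ℏ) * Real.exp (ℏ*((n:ℝ)+1)^2/2) *
      ∫ y : ℝ, Real.exp (-y^2/(2*ℏ)) * Wf ℏ (y + ℏ*((n:ℝ)+1)) := by
  have h1 : Set.Ioi (0:ℝ) = Real.exp '' Set.univ := by
    rw [Set.image_univ, Real.range_exp]
  rw [h1, integral_image_eq_integral_abs_deriv_smul MeasurableSet.univ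
    (fun x _ => (Real.hasDerivAt_exp x).hasDerivWithinAt) Real.exp_injective.injOn,
    setIntegral_univ]
  have key : ∀ x : ℝ, |Real.exp x| • ((Real.exp x)^n * Real.exp (Li2 (-Real.exp x)/ℏ))
      = Real.exp (-π^2/6/ℏ) * Real.exp (ℏ*((n:ℝ)+1)^2/2) *
        (Real.exp (-(x - ℏ*((n:ℝ)+1))^2/(2*ℏ)) * Wf ℏ x) := by
    intro x
    rw [abs_of_pos (Real.exp_pos x), smul_eq_mul, Wf, ← Real.exp_nat_mul]
    simp only [← Real.exp_add]
    rw [funeq x]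
    congr 1
    field_simp
    ring
  simp only [key]
  rw [MeasureTheory.integral_const_mul]
  congr 1
  have := integral_add_right_eq_self (μ := volume)
    (fun x : ℝ => Real.exp (-(x - ℏ*((n:ℝ)+1))^2/(2*ℏ)) * Wf ℏ x) (ℏ*((n:ℝ)+1))
  rw [← this]
  congr 1
  funext y
  simp only [add_sub_cancel_right]

lemma rr_eq {ℏ : ℝ} (hℏ : 0 < ℏ) (n : ℕ) :
    ∫ t in Set.Ioi (0:ℝ), t ^ n / (1 + t) * Real.exp (Li2 (-t) / ℏ)
    = Real.exp (-π^2/6/ℏ) * Real.exp (ℏ*(n:ℝ)^2/2) *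
      ∫ y : ℝ, Real.exp (-y^2/(2*ℏ)) * Wf ℏ (y + ℏ*(n:ℝ)) *
        (Real.exp (y + ℏ*(n:ℝ)) / (1 + Real.exp (y + ℏ*(n:ℝ)))) := by
  have h1 : Set.Ioi (0:ℝ) = Real.exp '' Set.univ := by
    rw [Set.image_univ, Real.range_exp]
  rw [h1, integral_image_eq_integral_abs_deriv_smul MeasurableSet.univ
    (fun x _ => (Real.hasDerivAt_exp x).hasDerivWithinAt) Real.exp_injective.injOn,
    setIntegral_univ]
  have key : ∀ x : ℝ,
      |Real.exp x| • ((Real.exp x)^n / (1 + Real.exp x) * Real.exp (Li2 (-Real.exp x)/ℏ))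
      = Real.exp (-π^2/6/ℏ) * Real.exp (ℏ*(n:ℝ)^2/2) *
        (Real.exp (-(x - ℏ*(n:ℝ))^2/(2*ℏ)) * Wf ℏ x *
          (Real.exp x / (1 + Real.exp x))) := by
    intro x
    have hu : (0:ℝ) < 1 + Real.exp x := by positivity
    rw [abs_of_pos (Real.exp_pos x), smul_eq_mul, Wf]
    have hexp : Real.exp x * ((Real.exp x)^n * Real.exp (Li2 (-Real.exp x)/ℏ))
        = Real.exp (-π^2/6/ℏ) * Real.exp (ℏ*(n:ℝ)^2/2) *
          (Real.exp (-(x - ℏ*(n:ℝ))^2/(2*ℏ)) *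
            Real.exp (-Li2 (-Real.exp (-x)) / ℏ) * Real.exp x) := by
      rw [← Real.exp_nat_mul]
      simp only [← Real.exp_add]
      rw [funeq x]
      congr 1
      field_simp
      ring
    field_simp at hexp ⊢
    linarith [hexp]
  simp only [key]
  rw [MeasureTheory.integral_const_mul]
  congr 1
  have := integral_add_right_eq_self (μ := volume)
    (fun x : ℝ => Real.exp (-(x - ℏ*(n:ℝ))^2/(2*ℏ)) * Wf ℏ x *
      (Real.exp x / (1 + Real.exp x))) (ℏ*(n:ℝ))
  rw [← this]
  congr 1
  funext y
  simp only [add_sub_cancel_right]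

/-! ### Main theorem -/


/-! ### Assembly pieces -/

def sigf (x : ℝ) : ℝ := Real.exp x / (1 + Real.exp x)

lemma sigf_continuous : Continuous sigf := by
  refine Real.continuous_exp.div (continuous_const.add Real.continuous_exp) fun x => ?_
  positivity

lemma sigf_nonneg (x : ℝ) : 0 ≤ sigf x := by
  have := Real.exp_pos x
  rw [sigf]
  positivity

lemma sigf_le_one (x : ℝ) : sigf x ≤ 1 := by
  rw [sigf, div_le_one (by positivity)]
  linarith [Real.exp_pos x]

lemma sigf_tendsto : Tendsto sigf atTop (𝓝 1) := by
  have h0 : Tendsto (fun x : ℝ => 1/(Real.exp (-x) + 1)) atTop (𝓝 (1/(0+1))) := by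
    refine Tendsto.div tendsto_const_nhds ?_ (by norm_num)
    exact Real.tendsto_exp_neg_atTop_nhds_zero.add tendsto_const_nhds
  norm_num at h0
  refine h0.congr fun x => ?_
  rw [sigf, Real.exp_neg]
  have h1 : (0:ℝ) < Real.exp x := Real.exp_pos x
  field_simp

def If (ℏ : ℝ) (n : ℕ) : ℝ := ∫ y : ℝ, Real.exp (-y^2/(2*ℏ)) * Wf ℏ (y + ℏ*((n:ℝ)+1))

def Jf (ℏ : ℝ) (n : ℕ) : ℝ :=
  ∫ y : ℝ, Real.exp (-y^2/(2*ℏ)) * Wf ℏ (y + ℏ*(n:ℝ)) * sigf (y + ℏ*(n:ℝ))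

lemma If_tendsto {ℏ : ℝ} (hℏ : 0 < ℏ) :
    Tendsto (If ℏ) atTop (𝓝 (Real.sqrt (2*π*ℏ))) := by
  have := main_tendsto hℏ (fun _ => 1) continuous_const (fun _ => zero_le_one)
    (fun _ => le_refl 1) tendsto_const_nhds
  simp only [mul_one] at this
  exact this

lemma Jf_tendsto {ℏ : ℝ} (hℏ : 0 < ℏ) :
    Tendsto (Jf ℏ) atTop (𝓝 (Real.sqrt (2*π*ℏ))) := by
  refine (tendsto_add_atTop_iff_nat 1).1 ?_
  have := main_tendsto hℏ sigf sigf_continuous sigf_nonneg sigf_le_one sigf_tendsto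
  refine this.congr fun n => ?_
  rw [Jf]
  simp only [Nat.cast_add, Nat.cast_one]

lemma ell_eq' {ℏ : ℝ} (hℏ : 0 < ℏ) (n : ℕ) :
    ell ℏ n = 2 * π * (Real.exp (-π^2/(6*ℏ)) * Real.exp (ℏ*((n:ℝ)+1)^2/2) * If ℏ n) := by
  have hA : Real.exp (-π^2/6/ℏ) = Real.exp (-π^2/(6*ℏ)) := by rw [div_div]
  rw [ell, ell_eq hℏ n, hA, If]

lemma rr_eq' {ℏ : ℝ} (hℏ : 0 < ℏ) (n : ℕ) :
    rr ℏ n = 2 * π * (Real.exp (-π^2/(6*ℏ)) * Real.exp (ℏ*(n:ℝ)^2/2) * Jf ℏ n) := by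
  have hA : Real.exp (-π^2/6/ℏ) = Real.exp (-π^2/(6*ℏ)) := by rw [div_div]
  rw [rr, rr_eq hℏ n, hA, Jf]
  simp only [sigf]

lemma part2 {ℏ : ℝ} (hℏ : 0 < ℏ) :
    Tendsto (fun n : ℕ =>
      ell ℏ n / (2 * π * Real.sqrt (2 * π * ℏ) * Real.exp (-π ^ 2 / (6 * ℏ)) *
        Real.exp (ℏ * ((n : ℝ) + 1) ^ 2 / 2))) atTop (𝓝 1) := by
  have hc : 0 < Real.sqrt (2*π*ℏ) := Real.sqrt_pos.2 (by positivity)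
  have h2 : ∀ n : ℕ, ell ℏ n / (2 * π * Real.sqrt (2 * π * ℏ) *
      Real.exp (-π ^ 2 / (6 * ℏ)) * Real.exp (ℏ * ((n : ℝ) + 1) ^ 2 / 2))
      = If ℏ n / Real.sqrt (2*π*ℏ) := by
    intro n
    rw [ell_eq' hℏ n]
    rw [div_eq_div_iff (by positivity) hc.ne']
    ring
  have := (If_tendsto hℏ).div_const (Real.sqrt (2*π*ℏ))
  rw [div_self hc.ne'] at this
  exact this.congr fun n => (h2 n).symm

lemma part3 {ℏ : ℝ} (hℏ : 0 < ℏ) :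
    Tendsto (fun n : ℕ =>
      rr ℏ n / (2 * π * Real.sqrt (2 * π * ℏ) * Real.exp (-π ^ 2 / (6 * ℏ)) *
        Real.exp (ℏ * (n : ℝ) ^ 2 / 2))) atTop (𝓝 1) := by
  have hc : 0 < Real.sqrt (2*π*ℏ) := Real.sqrt_pos.2 (by positivity)
  have h3 : ∀ n : ℕ, rr ℏ n / (2 * π * Real.sqrt (2 * π * ℏ) *
      Real.exp (-π ^ 2 / (6 * ℏ)) * Real.exp (ℏ * (n : ℝ) ^ 2 / 2))
      = Jf ℏ n / Real.sqrt (2*π*ℏ) := by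
    intro n
    rw [rr_eq' hℏ n]
    rw [div_eq_div_iff (by positivity) hc.ne']
    ring
  have := (Jf_tendsto hℏ).div_const (Real.sqrt (2*π*ℏ))
  rw [div_self hc.ne'] at this
  exact this.congr fun n => (h3 n).symm

lemma part1 {ℏ : ℝ} (hℏ : 0 < ℏ) :
    Tendsto (fun n : ℕ => rr ℏ n / ell ℏ n * Real.exp (ℏ * ((n : ℝ) + 1/2)))
      atTop (𝓝 1) := by
  have hc : 0 < Real.sqrt (2*π*ℏ) := Real.sqrt_pos.2 (by positivity)
  have hIev : ∀ᶠ n in atTop, 0 < If ℏ n :=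
    (If_tendsto hℏ).eventually (eventually_gt_nhds hc)
  have hev : (fun n : ℕ => rr ℏ n / ell ℏ n * Real.exp (ℏ * ((n : ℝ) + 1/2)))
      =ᶠ[atTop] fun n => Jf ℏ n / If ℏ n := by
    filter_upwards [hIev] with n hIn
    rw [rr_eq' hℏ n, ell_eq' hℏ n]
    have hBe : Real.exp (ℏ*(n:ℝ)^2/2) * Real.exp (ℏ*((n:ℝ)+1/2))
        = Real.exp (ℏ*((n:ℝ)+1)^2/2) := by
      rw [← Real.exp_add]; congr 1; ring
    have hπ : (0:ℝ) < π := Real.pi_pos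
    have hden : (0:ℝ) < 2 * π * (Real.exp (-π^2/(6*ℏ)) *
        Real.exp (ℏ*((n:ℝ)+1)^2/2) * If ℏ n) := by positivity
    rw [div_mul_eq_mul_div, div_eq_div_iff hden.ne' hIn.ne']
    rw [show 2 * π * (Real.exp (-π^2/(6*ℏ)) * Real.exp (ℏ*(n:ℝ)^2/2) * Jf ℏ n) *
          Real.exp (ℏ * ((n:ℝ) + 1/2)) * If ℏ n
        = 2 * π * (Real.exp (-π^2/(6*ℏ)) *
            (Real.exp (ℏ*(n:ℝ)^2/2) * Real.exp (ℏ*((n:ℝ)+1/2))) * If ℏ n) * Jf ℏ n from by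
          ring, hBe]
    ring
  have := (Jf_tendsto hℏ).div (If_tendsto hℏ) hc.ne'
  rw [div_self hc.ne'] at this
  exact this.congr' hev.symm


/-- case `Λ = ρ = 1`: the asymptotics
`r_n/ℓ_n ~ e^{-ℏ(n+1/2)}` as `n → ∞`; more precisely
`ℓ_n ~ 2π√(2πℏ) e^{-π²/(6ℏ)} e^{ℏ(n+1)²/2}` and `r_n ~ 2π√(2πℏ) e^{-π²/(6ℏ)} e^{ℏn²/2}`. -/
theorem stmt18 (ℏ : ℝ) (hℏ : 0 < ℏ) :
    Tendsto (fun n : ℕ => rr ℏ n / ell ℏ n * Real.exp (ℏ * ((n : ℝ) + 1/2)))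
      atTop (nhds 1) ∧
    Tendsto (fun n : ℕ =>
        ell ℏ n /
          (2 * π * Real.sqrt (2 * π * ℏ) * Real.exp (-π ^ 2 / (6 * ℏ)) *
            Real.exp (ℏ * ((n : ℝ) + 1) ^ 2 / 2)))
      atTop (nhds 1) ∧
    Tendsto (fun n : ℕ =>
        rr ℏ n /
          (2 * π * Real.sqrt (2 * π * ℏ) * Real.exp (-π ^ 2 / (6 * ℏ)) *
            Real.exp (ℏ * (n : ℝ) ^ 2 / 2)))
      atTop (nhds 1) := by
  exact ⟨part1 hℏ, part2 hℏ, part3 hℏ⟩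

end
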